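/- Let X be a GC₄-set of 15 nodes with no 5 collinear nodes. If three nodes of X use a common 4-node line ℓ, then these three nodes share two further 4-node lines: there exist lines ℓ', ℓ'' each containing exactly 4 nodes of X such that ℓ·ℓ'·ℓ'' divides the fundamental polynomial of each of the three nodes. -/

import Mathlib

open MvPolynomial

noncomputable section
open scoped Classical

/-- Bivariate real polynomials. -/
abbrev Poly2 := MvPolynomial (Fin 2) ℝ

/-- Evaluation of a bivariate polynomial at a point of the plane. -/
def evalPt (A : Fin 2 → ℝ) (p : Poly2) : ℝ := MvPolynomial.eval A p

/-- A line is (identified with) a polynomial of total degree 1. -/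
def IsLine (ℓ : Poly2) : Prop := ℓ.totalDegree = 1

/-- `X` is `n`-poised: unique interpolation from Π_n at the nodes of `X`. -/
def Poised (n : ℕ) (X : Finset (Fin 2 → ℝ)) : Prop :=
  ∀ c : (Fin 2 → ℝ) → ℝ,
    ∃! p : Poly2, p.totalDegree ≤ n ∧ ∀ A ∈ X, evalPt A p = c A

/-- `p` is an `n`-fundamental polynomial of the node `A` of `X`. -/
def IsFund (n : ℕ) (X : Finset (Fin 2 → ℝ)) (A : Fin 2 → ℝ) (p : Poly2) : Prop :=
  p.totalDegree ≤ n ∧ evalPt A p = 1 ∧ ∀ B ∈ X, B ≠ A → evalPt B p = 0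

/-- A `GC_n`-set: an `n`-poised set all of whose nodes have fundamental
polynomials that are products of `n` linear factors. -/
def GCSet (n : ℕ) (X : Finset (Fin 2 → ℝ)) : Prop :=
  Poised n X ∧
    ∀ A ∈ X, ∃ f : Fin n → Poly2, (∀ i, IsLine (f i)) ∧ IsFund n X A (∏ i, f i)

/-- The node `A` uses the line `ℓ`: `ℓ` divides a fundamental polynomial of `A`. -/
def Uses (n : ℕ) (X : Finset (Fin 2 → ℝ)) (A : Fin 2 → ℝ) (ℓ : Poly2) : Prop :=
  ∃ p, IsFund n X A p ∧ ℓ ∣ p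

/-- The nodes of `X` lying on the line `ℓ`. -/
def nodesOn (X : Finset (Fin 2 → ℝ)) (ℓ : Poly2) : Finset (Fin 2 → ℝ) :=
  X.filter (fun A => evalPt A ℓ = 0)

/-- `X` contains no 5 collinear nodes. -/
def NoFiveCollinear (X : Finset (Fin 2 → ℝ)) : Prop :=
  ∀ ℓ : Poly2, IsLine ℓ → (nodesOn X ℓ).card ≤ 4

/-!
The fundamental polynomial of a node `D` using `ℓ` is `ℓ * q_D`, where `q_D` is a product of three
lines and vanishes at every node off `ℓ` other than `D`. The 11 nodes off `ℓ` cannot impose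
independent conditions on the 10-dimensional space of cubics, so some nontrivial relation
`∑ c_P q(P) = 0` holds for all cubics `q`. Since `q_D` separates `D` from the other nodes off `ℓ`,
`c_D = 0` for `D = A, B, C`; so the support `S` of the relation has at most 8 points and lies on
the three lines of `q_A`, and no point of `S` can be separated from the rest of `S` by a cubic.
Removing the points on a line lowers the degree of non-separability by one, and a nonempty set
non-separable in degree `n` has at least `n + 2` points. With at most four nodes on a line this
forces `S` to be the disjoint union of two collinear quadruples, on lines `ℓ'` and `ℓ''`. Every
`q_D` vanishes on `S`, hence is divisible by `ℓ'` and by `ℓ''`.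
-/

open scoped Polynomial

lemma finsupp_fin_two_eq (s : Fin 2 →₀ ℕ) :
    s = Finsupp.single 0 (s 0) + Finsupp.single 1 (s 1) := by
  ext i; fin_cases i <;> simp

lemma finsupp_fin_two_sum (s : Fin 2 →₀ ℕ) : (s.sum fun _ e => e) = s 0 + s 1 := by
  rw [Finsupp.sum_fintype _ _ fun _ => rfl, Fin.sum_univ_two]

lemma MvPolynomial.polynomial_eval_aeval {σ R : Type*} [CommSemiring R] (g : σ → R[X]) (t : R)
    (p : MvPolynomial σ R) : (aeval g p).eval t = eval (fun i => (g i).eval t) p := by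
  rw [aeval_def, polynomial_eval_eval₂, ← eval₂_id]
  congr 1
  ext r
  simp

lemma MvPolynomial.natDegree_aeval_le {σ R : Type*} [CommSemiring R] {g : σ → R[X]}
    (hg : ∀ i, (g i).natDegree ≤ 1) (p : MvPolynomial σ R) :
    (aeval g p).natDegree ≤ p.totalDegree := by
  conv_lhs => rw [p.as_sum, map_sum]
  refine Polynomial.natDegree_sum_le_of_forall_le _ _ fun s hs => ?_
  rw [aeval_monomial, Polynomial.algebraMap_eq]
  refine (Polynomial.natDegree_C_mul_le _ _).trans ((Polynomial.natDegree_prod_le _ _).trans ?_)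
  refine (Finset.sum_le_sum fun i _ => Polynomial.natDegree_pow_le_of_le _ (hg i)).trans ?_
  simpa [Finsupp.sum] using le_totalDegree hs

lemma MvPolynomial.dvd_of_algHom_eq_zero {σ R A : Type*} [CommRing R] [CommRing A] [Algebra R A]
    {ℓ : MvPolynomial σ R} (φ : MvPolynomial σ R →ₐ[R] A) (ψ : A →ₐ[R] MvPolynomial σ R)
    (h : ∀ i, ℓ ∣ X i - ψ (φ (X i))) {p : MvPolynomial σ R} (hp : φ p = 0) : ℓ ∣ p := by
  let π := Ideal.Quotient.mkₐ R (Ideal.span {ℓ})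
  have hπ : π = (π.comp ψ).comp φ := algHom_ext fun i =>
    Ideal.Quotient.eq.mpr (Ideal.mem_span_singleton.mpr (h i))
  have : π p = 0 := by rw [hπ]; simp [hp]
  exact Ideal.mem_span_singleton.mp (Ideal.Quotient.eq_zero_iff_mem.mp this)

def linForm (a b c : ℝ) : Poly2 := C a * X 0 + C b * X 1 + C c

@[simp]
lemma evalPt_linForm (P : Fin 2 → ℝ) (a b c : ℝ) :
    evalPt P (linForm a b c) = a * P 0 + b * P 1 + c := by
  simp [linForm, evalPt]

@[simp]
lemma evalPt_C (P : Fin 2 → ℝ) (r : ℝ) : evalPt P (C r) = r := eval_C r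

@[simp]
lemma evalPt_mul (P : Fin 2 → ℝ) (p q : Poly2) : evalPt P (p * q) = evalPt P p * evalPt P q :=
  map_mul _ p q

lemma totalDegree_linForm_le (a b c : ℝ) : (linForm a b c).totalDegree ≤ 1 := by
  unfold linForm
  refine (totalDegree_add _ _).trans (max_le ((totalDegree_add _ _).trans (max_le ?_ ?_)) (by simp))
  all_goals exact (totalDegree_mul _ _).trans (by simp)

lemma linForm_zero_zero (c : ℝ) : linForm 0 0 c = C c := by simp [linForm]

lemma isLine_linForm {a b c : ℝ} (hab : a ^ 2 + b ^ 2 ≠ 0) : IsLine (linForm a b c) := by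
  refine le_antisymm (totalDegree_linForm_le a b c) (Nat.one_le_iff_ne_zero.mpr fun h0 => hab ?_)
  have hC := totalDegree_eq_zero_iff_eq_C.mp h0
  have h₁ := congrArg (evalPt ![a, b]) hC
  have h₀ := congrArg (evalPt 0) hC
  simp only [evalPt_linForm, evalPt_C, Matrix.cons_val_zero, Matrix.cons_val_one,
    Matrix.cons_val_fin_one, Pi.zero_apply, mul_zero, add_zero] at h₁ h₀
  linear_combination h₁ - h₀

lemma eq_linForm_coeff {p : Poly2} (hp : p.totalDegree ≤ 1) :
    p = linForm (coeff (Finsupp.single 0 1) p) (coeff (Finsupp.single 1 1) p) (coeff 0 p) := by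
  ext s
  simp only [linForm, coeff_add, coeff_C_mul, coeff_X, coeff_C]
  by_cases hs : s = Finsupp.single 0 1 ∨ s = Finsupp.single 1 1 ∨ s = 0
  · rcases hs with rfl | rfl | rfl <;> simp [Finsupp.single_eq_single_iff, eq_comm]
  · push Not at hs
    have hdeg : p.totalDegree < s.sum fun _ e => e := by
      rw [finsupp_fin_two_sum]
      by_contra! h
      rw [finsupp_fin_two_eq s] at hs
      obtain h | h | h : (s 0 = 1 ∧ s 1 = 0) ∨ (s 0 = 0 ∧ s 1 = 1) ∨ (s 0 = 0 ∧ s 1 = 0) := by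
        omega
      all_goals simp [h.1, h.2] at hs
    rw [coeff_eq_zero_of_totalDegree_lt hdeg, if_neg (Ne.symm hs.1), if_neg (Ne.symm hs.2.1),
      if_neg (Ne.symm hs.2.2)]
    ring

lemma IsLine.exists_eq_linForm {ℓ : Poly2} (hℓ : IsLine ℓ) :
    ∃ a b c : ℝ, a ^ 2 + b ^ 2 ≠ 0 ∧ ℓ = linForm a b c := by
  refine ⟨_, _, _, fun hab => ?_, eq_linForm_coeff hℓ.le⟩
  have h := eq_linForm_coeff hℓ.le
  rw [show coeff (Finsupp.single 0 1) ℓ = 0 by nlinarith,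
    show coeff (Finsupp.single 1 1) ℓ = 0 by nlinarith, linForm_zero_zero] at h
  rw [IsLine, h, totalDegree_C] at hℓ
  exact zero_ne_one hℓ

lemma IsLine.ne_zero {ℓ : Poly2} (hℓ : IsLine ℓ) : ℓ ≠ 0 := by
  rintro rfl
  exact zero_ne_one hℓ

lemma IsLine.prime {ℓ : Poly2} (hℓ : IsLine ℓ) : Prime ℓ := by
  refine (irreducible_of_totalDegree_eq_one hℓ fun x hx => isUnit_iff_ne_zero.mpr ?_).prime
  rintro rfl
  exact hℓ.ne_zero (MvPolynomial.ext _ _ fun s => zero_dvd_iff.mp (hx s))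

lemma sq_add_sq_sub_ne_zero {P Q : Fin 2 → ℝ} (hPQ : P ≠ Q) :
    (P 0 - Q 0) ^ 2 + (P 1 - Q 1) ^ 2 ≠ 0 := by
  intro h
  obtain ⟨h0, h1⟩ : P 0 = Q 0 ∧ P 1 = Q 1 :=
    ⟨by nlinarith [sq_nonneg (P 0 - Q 0), sq_nonneg (P 1 - Q 1)],
      by nlinarith [sq_nonneg (P 0 - Q 0), sq_nonneg (P 1 - Q 1)]⟩
  exact hPQ (funext fun i => by fin_cases i <;> assumption)

lemma exists_isLine_through {P Q : Fin 2 → ℝ} (hPQ : P ≠ Q) :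
    ∃ m : Poly2, IsLine m ∧ evalPt P m = 0 ∧ evalPt Q m = 0 := by
  refine ⟨linForm (Q 1 - P 1) (P 0 - Q 0) (P 1 * Q 0 - P 0 * Q 1), isLine_linForm ?_,
    by simp; ring, by simp; ring⟩
  have := sq_add_sq_sub_ne_zero hPQ
  contrapose! this
  linear_combination this

lemma exists_line_through_not {D E : Fin 2 → ℝ} (hDE : D ≠ E) :
    ∃ m : Poly2, m.totalDegree ≤ 1 ∧ evalPt E m = 0 ∧ evalPt D m ≠ 0 := by
  -- the line through `E` perpendicular to `D - E`
  refine ⟨linForm (D 0 - E 0) (D 1 - E 1) (-(D 0 - E 0) * E 0 - (D 1 - E 1) * E 1),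
    totalDegree_linForm_le _ _ _, by simp; ring, ?_⟩
  have := sq_add_sq_sub_ne_zero hDE
  contrapose! this
  rw [evalPt_linForm] at this
  linear_combination this

lemma exists_separating (D : Fin 2 → ℝ) (F : Finset (Fin 2 → ℝ)) (hD : D ∉ F) :
    ∃ q : Poly2, q.totalDegree ≤ F.card ∧ (∀ P ∈ F, evalPt P q = 0) ∧ evalPt D q ≠ 0 := by
  induction F using Finset.induction_on with
  | empty => exact ⟨1, by simp, by simp, by simp [evalPt]⟩
  | insert E F hE ih =>
    obtain ⟨q, hq, hqF, hqD⟩ := ih (fun h => hD (Finset.mem_insert_of_mem h))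
    obtain ⟨m, hm, hmE, hmD⟩ := exists_line_through_not (D := D) (E := E)
      fun h => hD (h ▸ Finset.mem_insert_self E F)
    refine ⟨m * q, ?_, fun P hP => ?_, by simp [hmD, hqD]⟩
    · rw [Finset.card_insert_of_notMem hE]
      exact (totalDegree_mul _ _).trans (by omega)
    · rcases Finset.mem_insert.mp hP with rfl | hP
      · simp [hmE]
      · simp [hqF P hP]

section LineParam

variable {a b c : ℝ}

/-- Restriction to the line `a x + b y + c = 0` (for `a² + b² ≠ 0`), parametrized so that its
point `Q` has parameter `a Q₁ - b Q₀`. -/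
def lineParam (a b c : ℝ) : Poly2 →ₐ[ℝ] ℝ[X] :=
  aeval ![(-(a * c) / (a ^ 2 + b ^ 2)) • 1 - (b / (a ^ 2 + b ^ 2)) • Polynomial.X,
    (-(b * c) / (a ^ 2 + b ^ 2)) • 1 + (a / (a ^ 2 + b ^ 2)) • Polynomial.X]

lemma lineParam_eval (hab : a ^ 2 + b ^ 2 ≠ 0) {Q : Fin 2 → ℝ} (hQ : a * Q 0 + b * Q 1 + c = 0)
    (p : Poly2) : (lineParam a b c p).eval (a * Q 1 - b * Q 0) = evalPt Q p := by
  rw [lineParam, polynomial_eval_aeval, evalPt]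
  congr 2
  funext i
  fin_cases i <;>
    simp only [Fin.zero_eta, Fin.mk_one, Matrix.cons_val_zero, Matrix.cons_val_one,
      Matrix.cons_val_fin_one, Polynomial.eval_add, Polynomial.eval_sub, Polynomial.eval_smul,
      Polynomial.eval_one, Polynomial.eval_X, smul_eq_mul, mul_one] <;>
    field_simp
  · linear_combination -a * hQ
  · linear_combination -b * hQ

lemma natDegree_lineParam_le (p : Poly2) : (lineParam a b c p).natDegree ≤ p.totalDegree := by
  refine natDegree_aeval_le (fun i => ?_) p
  fin_cases i <;>
    simp only [Fin.zero_eta, Fin.mk_one, Matrix.cons_val_zero, Matrix.cons_val_one,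
      Matrix.cons_val_fin_one] <;>
    compute_degree

lemma linForm_dvd_of_lineParam_eq_zero (hab : a ^ 2 + b ^ 2 ≠ 0) {p : Poly2}
    (hp : lineParam a b c p = 0) : linForm a b c ∣ p := by
  -- `linForm (-b) a 0` reads off the parameter of a point of the line
  refine dvd_of_algHom_eq_zero _ (Polynomial.aeval (linForm (-b) a 0)) (fun i => ?_) hp
  have hdvd (r : ℝ) : linForm a b c ∣ r • linForm a b c := by
    rw [smul_eq_C_mul]
    exact dvd_mul_left _ _
  fin_cases i <;> [convert hdvd (a / (a ^ 2 + b ^ 2)) using 1;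
    convert hdvd (b / (a ^ 2 + b ^ 2)) using 1] <;>
  · simp only [lineParam, linForm, C_eq_smul_one, Algebra.smul_mul_assoc, one_mul, aeval_X,
      Polynomial.aeval_X, map_add, map_sub, map_smul, map_one, Fin.zero_eta, Fin.mk_one,
      Matrix.cons_val_zero, Matrix.cons_val_one, Matrix.cons_val_fin_one]
    match_scalars <;> field_simp <;> ring

end LineParam

theorem IsLine.dvd_of_forall_evalPt_eq_zero {ℓ p : Poly2} (hℓ : IsLine ℓ)
    {T : Finset (Fin 2 → ℝ)} (hT : p.totalDegree < T.card) (hTℓ : ∀ P ∈ T, evalPt P ℓ = 0)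
    (hp : ∀ P ∈ T, evalPt P p = 0) : ℓ ∣ p := by
  obtain ⟨a, b, c, hab, rfl⟩ := hℓ.exists_eq_linForm
  simp only [evalPt_linForm] at hTℓ
  have hinj : Set.InjOn (fun Q : Fin 2 → ℝ => a * Q 1 - b * Q 0) T := by
    intro Q hQ Q' hQ' h
    funext i
    have := lineParam_eval hab (hTℓ Q hQ) (X i)
    rw [show a * Q 1 - b * Q 0 = a * Q' 1 - b * Q' 0 from h,
      lineParam_eval hab (hTℓ Q' hQ')] at this
    simpa [evalPt] using this.symm
  refine linForm_dvd_of_lineParam_eq_zero hab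
    (Polynomial.eq_zero_of_natDegree_lt_card_of_eval_eq_zero' _
      (T.image fun Q => a * Q 1 - b * Q 0) ?_ ?_)
  · simp only [Finset.mem_image]
    rintro _ ⟨Q, hQ, rfl⟩
    rw [lineParam_eval hab (hTℓ Q hQ)]
    exact hp Q hQ
  · rw [Finset.card_image_of_injOn hinj]
    exact (natDegree_lineParam_le p).trans_lt hT

lemma IsLine.eq_mul_C_of_dvd {ℓ m : Poly2} (hℓ : IsLine ℓ) (hm : IsLine m) (h : ℓ ∣ m) :
    ∃ κ : ℝ, κ ≠ 0 ∧ m = ℓ * C κ := by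
  obtain ⟨r, rfl⟩ := h
  have hr : r ≠ 0 := right_ne_zero_of_mul hm.ne_zero
  have hdeg : r.totalDegree = 0 := by
    have := totalDegree_mul_of_isDomain hℓ.ne_zero hr
    rw [hm, hℓ] at this
    omega
  refine ⟨coeff 0 r, fun h0 => hr ?_, by rw [← totalDegree_eq_zero_iff_eq_C.mp hdeg]⟩
  rw [totalDegree_eq_zero_iff_eq_C.mp hdeg, h0, C_0]

lemma IsLine.mul_dvd {ℓ₁ ℓ₂ q : Poly2} (h₁ : IsLine ℓ₁) (h₂ : IsLine ℓ₂) {P : Fin 2 → ℝ}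
    (hP₁ : evalPt P ℓ₁ ≠ 0) (hP₂ : evalPt P ℓ₂ = 0) (hq₁ : ℓ₁ ∣ q) (hq₂ : ℓ₂ ∣ q) :
    ℓ₁ * ℓ₂ ∣ q := by
  obtain ⟨r, rfl⟩ := hq₁
  refine mul_dvd_mul_left ℓ₁ ((h₂.prime.dvd_or_dvd hq₂).resolve_left ?_)
  rintro ⟨s, rfl⟩
  simp [hP₂] at hP₁

theorem IsLine.mul_dvd_of_forall_evalPt_eq_zero {ℓ₁ ℓ₂ q : Poly2} (h₁ : IsLine ℓ₁) (h₂ : IsLine ℓ₂)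
    {S : Finset (Fin 2 → ℝ)} (hq₁ : q.totalDegree < (nodesOn S ℓ₁).card)
    (hq₂ : q.totalDegree < (nodesOn S ℓ₂).card) (hdisj : Disjoint (nodesOn S ℓ₁) (nodesOn S ℓ₂))
    (hq : ∀ P ∈ S, evalPt P q = 0) : ℓ₁ * ℓ₂ ∣ q := by
  have hdvd {ℓ : Poly2} (hℓ : IsLine ℓ) (h : q.totalDegree < (nodesOn S ℓ).card) : ℓ ∣ q :=
    hℓ.dvd_of_forall_evalPt_eq_zero h (fun P hP => (Finset.mem_filter.mp hP).2)
      fun P hP => hq P (Finset.mem_filter.mp hP).1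
  obtain ⟨P, hP⟩ := Finset.card_pos.mp (pos_of_gt hq₂)
  have hP₁ : evalPt P ℓ₁ ≠ 0 := fun h =>
    Finset.disjoint_left.mp hdisj (Finset.mem_filter.mpr ⟨(Finset.mem_filter.mp hP).1, h⟩) hP
  exact h₁.mul_dvd h₂ hP₁ (Finset.mem_filter.mp hP).2 (hdvd h₁ hq₁) (hdvd h₂ hq₂)

lemma Poised.eq_of_isFund {n : ℕ} {X : Finset (Fin 2 → ℝ)} {D : Fin 2 → ℝ} {p p' : Poly2}
    (hX : Poised n X) (hp : IsFund n X D p) (hp' : IsFund n X D p') : p = p' := by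
  obtain ⟨r, -, hr⟩ := hX fun B => if B = D then 1 else 0
  have key : ∀ s, IsFund n X D s → s = r := fun s hs => hr s ⟨hs.1, fun B hB => by
    split_ifs with h
    · exact h ▸ hs.2.1
    · exact hs.2.2 B hB h⟩
  rw [key p hp, key p' hp']

lemma IsLine.exists_eq_mul_prod {n : ℕ} {ℓ : Poly2} (hℓ : IsLine ℓ) {f : Fin (n + 1) → Poly2}
    (hf : ∀ i, IsLine (f i)) (h : ℓ ∣ ∏ i, f i) :
    ∃ κ : ℝ, κ ≠ 0 ∧ ∃ g : Fin n → Poly2, (∀ j, IsLine (g j)) ∧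
      ∏ i, f i = ℓ * (C κ * ∏ j, g j) := by
  obtain ⟨i, -, hi⟩ := hℓ.prime.exists_mem_finset_dvd h
  obtain ⟨κ, hκ, hfi⟩ := hℓ.eq_mul_C_of_dvd (hf i) hi
  refine ⟨κ, hκ, fun j => f (i.succAbove j), fun j => hf _, ?_⟩
  rw [Fin.prod_univ_succAbove f i, hfi]
  ring

lemma GCSet.exists_isFund_mul {n : ℕ} {X : Finset (Fin 2 → ℝ)} {D : Fin 2 → ℝ} {ℓ : Poly2}
    (hX : GCSet (n + 1) X) (hD : D ∈ X) (hℓ : IsLine ℓ) (hU : Uses (n + 1) X D ℓ) :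
    ∃ q : Poly2, IsFund (n + 1) X D (ℓ * q) ∧ q.totalDegree ≤ n ∧
      ∃ g : Fin n → Poly2, (∀ j, IsLine (g j)) ∧ ∀ P, evalPt P q = 0 → ∃ j, evalPt P (g j) = 0 := by
  obtain ⟨f, hf, hfund⟩ := hX.2 D hD
  obtain ⟨p, hp, hℓp⟩ := hU
  rw [hX.1.eq_of_isFund hp hfund] at hℓp
  obtain ⟨κ, hκ, g, hg, hprod⟩ := hℓ.exists_eq_mul_prod hf hℓp
  refine ⟨C κ * ∏ j, g j, hprod ▸ hfund, ?_, g, hg, fun P hP => ?_⟩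
  · refine (totalDegree_mul _ _).trans ?_
    rw [totalDegree_C, zero_add]
    refine (totalDegree_finsetProd _ _).trans ?_
    simpa using Finset.sum_le_sum fun j (_ : j ∈ Finset.univ) => (hg j).le
  · simpa [evalPt, hκ, Finset.prod_eq_zero_iff] using hP

lemma IsFund.separates {n : ℕ} {X : Finset (Fin 2 → ℝ)} {D : Fin 2 → ℝ} {ℓ q : Poly2}
    (hf : IsFund n X D (ℓ * q)) (hD : D ∈ X) :
    D ∈ X.filter (fun P => evalPt P ℓ ≠ 0) ∧ evalPt D q ≠ 0 ∧
      ∀ P ∈ X.filter (fun P => evalPt P ℓ ≠ 0), P ≠ D → evalPt P q = 0 := by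
  have hD1 := hf.2.1
  rw [evalPt_mul] at hD1
  refine ⟨Finset.mem_filter.mpr ⟨hD, left_ne_zero_of_mul_eq_one hD1⟩,
    right_ne_zero_of_mul_eq_one hD1, fun P hP hPD => ?_⟩
  have := hf.2.2 P (Finset.mem_filter.mp hP).1 hPD
  rw [evalPt_mul] at this
  exact (mul_eq_zero.mp this).resolve_left (Finset.mem_filter.mp hP).2

lemma card_nodesOn_add_card_filter (S : Finset (Fin 2 → ℝ)) (m : Poly2) :
    (nodesOn S m).card + (S.filter fun P => evalPt P m ≠ 0).card = S.card :=
  Finset.card_filter_add_card_filter_not _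

def NonSeparable (n : ℕ) (S : Finset (Fin 2 → ℝ)) : Prop :=
  ∀ D ∈ S, ∀ q : Poly2, q.totalDegree ≤ n → (∀ P ∈ S, P ≠ D → evalPt P q = 0) → evalPt D q = 0

namespace NonSeparable

variable {n : ℕ} {S : Finset (Fin 2 → ℝ)}

theorem add_two_le_card (h : NonSeparable n S) (hne : S.Nonempty) : n + 2 ≤ S.card := by
  obtain ⟨D, hD⟩ := hne
  obtain ⟨q, hq, hqS, hqD⟩ := exists_separating D (S.erase D) (S.notMem_erase D)
  by_contra! hlt
  rw [Finset.card_erase_of_mem hD] at hq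
  exact hqD (h D hD q (by omega) fun P hP hPD => hqS P (Finset.mem_erase.mpr ⟨hPD, hP⟩))

theorem filter_ne_zero (h : NonSeparable (n + 1) S) {m : Poly2} (hm : m.totalDegree ≤ 1) :
    NonSeparable n (S.filter fun P => evalPt P m ≠ 0) := by
  intro D hD q hq hvan
  obtain ⟨hDS, hDm⟩ := Finset.mem_filter.mp hD
  have := h D hDS (m * q) ((totalDegree_mul _ _).trans (by omega)) fun P hP hPD => by
    by_cases hPm : evalPt P m = 0
    · simp [hPm]
    · simp [hvan P (Finset.mem_filter.mpr ⟨hP, hPm⟩) hPD]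
  simpa [hDm] using this

theorem exists_isLine (h : NonSeparable (n + 1) S) (hS : S.card = n + 3) :
    ∃ m, IsLine m ∧ ∀ P ∈ S, evalPt P m = 0 := by
  obtain ⟨P, hP, Q, hQ, hPQ⟩ := Finset.one_lt_card.mp (by omega : 1 < S.card)
  obtain ⟨m, hm, hPm, hQm⟩ := exists_isLine_through hPQ
  refine ⟨m, hm, fun R hR => by_contra fun hRm => ?_⟩
  have h2 : 1 < (nodesOn S m).card :=
    Finset.one_lt_card.mpr
      ⟨P, Finset.mem_filter.mpr ⟨hP, hPm⟩, Q, Finset.mem_filter.mpr ⟨hQ, hQm⟩, hPQ⟩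
  have := (h.filter_ne_zero hm.le).add_two_le_card ⟨R, Finset.mem_filter.mpr ⟨hR, hRm⟩⟩
  have := card_nodesOn_add_card_filter S m
  omega

theorem exists_complementary_line (h : NonSeparable 3 S) (hne : S.Nonempty) (hcard : S.card ≤ 8)
    (h4 : ∀ m, IsLine m → (nodesOn S m).card ≤ 4) {m : Poly2} (hm : m.totalDegree ≤ 1)
    (hm4 : (nodesOn S m).card = 4) :
    ∃ m', IsLine m' ∧ (nodesOn S m').card = 4 ∧ Disjoint (nodesOn S m) (nodesOn S m') := by
  have := card_nodesOn_add_card_filter S m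
  have := h.add_two_le_card hne
  set S' := S.filter fun P => evalPt P m ≠ 0
  have hS' : NonSeparable 2 S' := h.filter_ne_zero hm
  have hS'4 : S'.card = 4 :=
    le_antisymm (by omega) (hS'.add_two_le_card (Finset.card_pos.mp (by omega)))
  obtain ⟨m', hm', hS'm'⟩ := hS'.exists_isLine hS'4
  have heq : S' = nodesOn S m' := Finset.eq_of_subset_of_card_le
    (fun P hP => Finset.mem_filter.mpr ⟨(Finset.mem_filter.mp hP).1, hS'm' P hP⟩)
    (hS'4 ▸ h4 m' hm')
  exact ⟨m', hm', heq ▸ hS'4, heq ▸ Finset.disjoint_filter_filter_not S S _⟩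

theorem three_le_card_filter (h : NonSeparable 3 S) (hne : S.Nonempty) {m m' : Poly2}
    (hm : m.totalDegree ≤ 1) (hm' : m'.totalDegree ≤ 1) (h3 : (nodesOn S m).card ≤ 3)
    (h3' : (nodesOn S m').card ≤ 3) :
    3 ≤ (S.filter fun P => evalPt P m ≠ 0 ∧ evalPt P m' ≠ 0).card := by
  have := card_nodesOn_add_card_filter S m
  have := h.add_two_le_card hne
  set S₁ := S.filter fun P => evalPt P m ≠ 0
  have h₁ : 4 ≤ S₁.card :=
    (h.filter_ne_zero hm).add_two_le_card (Finset.card_pos.mp (by omega : 0 < S₁.card))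
  have hsub : nodesOn S₁ m' ⊆ nodesOn S m' :=
    Finset.filter_subset_filter _ (Finset.filter_subset _ S)
  have := Finset.card_le_card hsub
  have := card_nodesOn_add_card_filter S₁ m'
  have := ((h.filter_ne_zero hm).filter_ne_zero hm').add_two_le_card
    (Finset.card_pos.mp (by omega : 0 < (S₁.filter fun P => evalPt P m' ≠ 0).card))
  rwa [Finset.filter_filter] at this

theorem exists_card_nodesOn_eq_four (h : NonSeparable 3 S) (hne : S.Nonempty) (hcard : S.card ≤ 8)
    (h4 : ∀ m, IsLine m → (nodesOn S m).card ≤ 4) {g : Fin 3 → Poly2} (hg : ∀ j, IsLine (g j))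
    (hcov : ∀ P ∈ S, ∃ j, evalPt P (g j) = 0) : ∃ j, (nodesOn S (g j)).card = 4 := by
  by_contra! hne4
  have h3 : ∀ j, (nodesOn S (g j)).card ≤ 3 := fun j => by
    have := h4 _ (hg j); have := hne4 j; omega
  -- by the cover, the points of `R i j` lie on the third line only, so the `R`s are disjoint
  let R (i j : Fin 3) := S.filter fun P => evalPt P (g i) ≠ 0 ∧ evalPt P (g j) ≠ 0
  have hR (i j : Fin 3) : 3 ≤ (R i j).card :=
    h.three_le_card_filter hne (hg i).le (hg j).le (h3 i) (h3 j)
  have hoff : ∀ P ∈ S, evalPt P (g 0) ≠ 0 → evalPt P (g 1) ≠ 0 → evalPt P (g 2) ≠ 0 → False := by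
    intro P hP h0 h1 h2
    obtain ⟨j, hj⟩ := hcov P hP
    fin_cases j <;> simp_all
  have hd₁ : Disjoint (R 1 2) (R 0 2) := Finset.disjoint_left.mpr fun P hP hP' => by
    simp only [R, Finset.mem_filter] at hP hP'
    exact hoff P hP.1 hP'.2.1 hP.2.1 hP.2.2
  have hd₂ : Disjoint (R 1 2 ∪ R 0 2) (R 0 1) := Finset.disjoint_left.mpr fun P hP hP' => by
    simp only [R, Finset.mem_union, Finset.mem_filter] at hP hP'
    rcases hP with hP | hP
    · exact hoff P hP.1 hP'.2.1 hP'.2.2 hP.2.2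
    · exact hoff P hP.1 hP'.2.1 hP'.2.2 hP.2.2
  have := Finset.card_le_card (Finset.union_subset (Finset.union_subset (Finset.filter_subset _ S)
    (Finset.filter_subset _ S)) (Finset.filter_subset _ S) : R 1 2 ∪ R 0 2 ∪ R 0 1 ⊆ S)
  rw [Finset.card_union_of_disjoint hd₂, Finset.card_union_of_disjoint hd₁] at this
  have := hR 1 2; have := hR 0 2; have := hR 0 1
  omega

theorem exists_two_lines (h : NonSeparable 3 S) (hne : S.Nonempty) (hcard : S.card ≤ 8)
    (h4 : ∀ m, IsLine m → (nodesOn S m).card ≤ 4) {g : Fin 3 → Poly2} (hg : ∀ j, IsLine (g j))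
    (hcov : ∀ P ∈ S, ∃ j, evalPt P (g j) = 0) :
    ∃ ℓ' ℓ'', IsLine ℓ' ∧ IsLine ℓ'' ∧ (nodesOn S ℓ').card = 4 ∧ (nodesOn S ℓ'').card = 4 ∧
      Disjoint (nodesOn S ℓ') (nodesOn S ℓ'') := by
  obtain ⟨j, hj⟩ := h.exists_card_nodesOn_eq_four hne hcard h4 hg hcov
  obtain ⟨m, hm, hm4, hdisj⟩ := h.exists_complementary_line hne hcard h4 (hg j).le hj
  exact ⟨g j, m, hg j, hm, hj, hm4, hdisj⟩

end NonSeparable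

lemma finrank_restrictTotalDegree_three_le :
    Module.finrank ℝ (restrictTotalDegree (Fin 2) ℝ 3) ≤ 10 := by
  let M : Finset (Fin 2 →₀ ℕ) :=
    ((Finset.range 4 ×ˢ Finset.range 4).filter fun ij => ij.1 + ij.2 ≤ 3).image
      fun ij => Finsupp.single 0 ij.1 + Finsupp.single 1 ij.2
  have hM : {s : Fin 2 →₀ ℕ | (s.sum fun _ e => e) ≤ 3} ⊆ M := fun s hs => by
    simp only [Set.mem_ofPred_eq, finsupp_fin_two_sum] at hs
    refine Finset.mem_image.mpr ⟨(s 0, s 1), ?_, (finsupp_fin_two_eq s).symm⟩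
    simp only [Finset.mem_filter, Finset.mem_product, Finset.mem_range]
    omega
  calc Module.finrank ℝ (restrictTotalDegree (Fin 2) ℝ 3)
      ≤ Module.finrank ℝ (Submodule.span ℝ (↑(M.image (monomial · (1 : ℝ))) : Set Poly2)) := by
        refine Submodule.finrank_mono ?_
        rw [restrictTotalDegree, restrictSupport_eq_span, Finset.coe_image]
        exact Submodule.span_mono (Set.image_mono hM)
    _ ≤ (M.image (monomial · (1 : ℝ))).card := finrank_span_finset_le_card _
    _ ≤ 10 := Finset.card_image_le.trans (Finset.card_image_le.trans (by decide))

theorem exists_nonSeparable_subset {T : Finset (Fin 2 → ℝ)} (hT : 10 < T.card) :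
    ∃ S ⊆ T, S.Nonempty ∧ NonSeparable 3 S ∧
      ∀ D ∈ T, ∀ q : Poly2, q.totalDegree ≤ 3 → evalPt D q ≠ 0 →
        (∀ P ∈ T, P ≠ D → evalPt P q = 0) → D ∉ S := by
  let V := restrictTotalDegree (Fin 2) ℝ 3
  let ev : (Fin 2 → ℝ) → Module.Dual ℝ V := fun P => (aeval P).toLinearMap ∘ₗ V.subtype
  have hdep : ¬ LinearIndepOn ℝ ev (T : Set (Fin 2 → ℝ)) := fun hli => by
    have := hli.fintype_card_le_finrank
    simp only [Subspace.dual_finrank_eq, Finset.coe_sort_coe, Fintype.card_coe] at this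
    linarith [finrank_restrictTotalDegree_three_le]
  obtain ⟨c, hc, P₀, hP₀, hcP₀⟩ := not_linearIndepOn_finset_iff.mp hdep
  have hsum (q : Poly2) (hq : q.totalDegree ≤ 3) : ∑ P ∈ T, c P * evalPt P q = 0 := by
    simpa [ev, evalPt] using LinearMap.congr_fun hc ⟨q, (mem_restrictTotalDegree _ _ _).mpr hq⟩
  have key : ∀ D ∈ T, ∀ q : Poly2, q.totalDegree ≤ 3 →
      (∀ P ∈ T, P ≠ D → c P ≠ 0 → evalPt P q = 0) → c D * evalPt D q = 0 := by
    intro D hD q hq hvan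
    rw [← hsum q hq, Finset.sum_eq_single_of_mem D hD fun P hP hPD => ?_]
    by_cases hcP : c P = 0
    · simp [hcP]
    · simp [hvan P hP hPD hcP]
  refine ⟨T.filter (c · ≠ 0), Finset.filter_subset _ _, ⟨P₀, Finset.mem_filter.mpr ⟨hP₀, hcP₀⟩⟩,
    fun D hD q hq hvan => ?_, fun D hD q hq hqD hvan hDS => ?_⟩
  · obtain ⟨hDT, hcD⟩ := Finset.mem_filter.mp hD
    exact (mul_eq_zero.mp (key D hDT q hq fun P hP hPD hcP =>
      hvan P (Finset.mem_filter.mpr ⟨hP, hcP⟩) hPD)).resolve_left hcD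
  · exact (Finset.mem_filter.mp hDS).2
      ((mul_eq_zero.mp (key D hD q hq fun P hP hPD _ => hvan P hP hPD)).resolve_right hqD)

/-- If three nodes of a `GC₄`-set of 15 nodes (no 5 collinear) use a common
4-node line `ℓ`, then they share two further 4-node lines. -/
theorem stmt7 (X : Finset (Fin 2 → ℝ)) (hGC : GCSet 4 X) (hcard : X.card = 15)
    (h5 : NoFiveCollinear X)
    (ℓ : Poly2) (hℓ : IsLine ℓ) (hk : (nodesOn X ℓ).card = 4)
    (A B C : Fin 2 → ℝ) (hA : A ∈ X) (hB : B ∈ X) (hC : C ∈ X)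
    (hAB : A ≠ B) (hAC : A ≠ C) (hBC : B ≠ C)
    (hUA : Uses 4 X A ℓ) (hUB : Uses 4 X B ℓ) (hUC : Uses 4 X C ℓ) :
    ∃ ℓ' ℓ'' : Poly2, IsLine ℓ' ∧ IsLine ℓ'' ∧
      (nodesOn X ℓ').card = 4 ∧ (nodesOn X ℓ'').card = 4 ∧
      (∃ p, IsFund 4 X A p ∧ ℓ * ℓ' * ℓ'' ∣ p) ∧
      (∃ p, IsFund 4 X B p ∧ ℓ * ℓ' * ℓ'' ∣ p) ∧
      (∃ p, IsFund 4 X C p ∧ ℓ * ℓ' * ℓ'' ∣ p) := by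
  obtain ⟨qA, hfA, hqA, g, hg, hcov⟩ := hGC.exists_isFund_mul hA hℓ hUA
  obtain ⟨qB, hfB, hqB, -⟩ := hGC.exists_isFund_mul hB hℓ hUB
  obtain ⟨qC, hfC, hqC, -⟩ := hGC.exists_isFund_mul hC hℓ hUC
  have hsplit := card_nodesOn_add_card_filter X ℓ
  set T := X.filter fun P => evalPt P ℓ ≠ 0
  obtain ⟨S, hST, hne, hS, hsep⟩ := exists_nonSeparable_subset (T := T) (by omega)
  have hout {D q} (hD : D ∈ X) (hf : IsFund 4 X D (ℓ * q)) (hq : q.totalDegree ≤ 3) :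
      D ∈ T ∧ D ∉ S ∧ ∀ P ∈ S, evalPt P q = 0 := by
    obtain ⟨hDT, hqD, hvan⟩ := hf.separates hD
    have hDS := hsep D hDT q hq hqD hvan
    exact ⟨hDT, hDS, fun P hP => hvan P (hST hP) (ne_of_mem_of_not_mem hP hDS)⟩
  obtain ⟨hAT, hAS, hvanA⟩ := hout hA hfA hqA
  obtain ⟨hBT, hBS, hvanB⟩ := hout hB hfB hqB
  obtain ⟨hCT, hCS, hvanC⟩ := hout hC hfC hqC
  have hS8 : S.card ≤ 8 := by
    have := Finset.card_le_card (Finset.union_subset hST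
      (by simp [Finset.insert_subset_iff, hAT, hBT, hCT]) : S ∪ {A, B, C} ⊆ T)
    rw [Finset.card_union_of_disjoint (by simp [hAS, hBS, hCS]),
      Finset.card_eq_three.mpr ⟨A, B, C, hAB, hAC, hBC, rfl⟩] at this
    omega
  have hSX (m : Poly2) : nodesOn S m ⊆ nodesOn X m :=
    Finset.filter_subset_filter _ (hST.trans (Finset.filter_subset _ _))
  obtain ⟨ℓ', ℓ'', h', h'', h4', h4'', hdisj⟩ := hS.exists_two_lines hne hS8
    (fun m hm => (Finset.card_le_card (hSX m)).trans (h5 m hm)) hg fun P hP => hcov P (hvanA P hP)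
  have hX4 {m} (hm : IsLine m) (h : (nodesOn S m).card = 4) : (nodesOn X m).card = 4 :=
    le_antisymm (h5 m hm) (h ▸ Finset.card_le_card (hSX m))
  have hdvd {D q} (hf : IsFund 4 X D (ℓ * q)) (hq : q.totalDegree ≤ 3)
      (hvan : ∀ P ∈ S, evalPt P q = 0) : ∃ p, IsFund 4 X D p ∧ ℓ * ℓ' * ℓ'' ∣ p :=
    ⟨_, hf, mul_assoc ℓ ℓ' ℓ'' ▸ mul_dvd_mul_left ℓ
      (h'.mul_dvd_of_forall_evalPt_eq_zero h'' (by omega) (by omega) hdisj hvan)⟩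
  exact ⟨ℓ', ℓ'', h', h'', hX4 h' h4', hX4 h'' h4'', hdvd hfA hqA hvanA, hdvd hfB hqB hvanB,
    hdvd hfC hqC hvanC⟩
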